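/- arXiv:1807.00562 — 2 statements merged into one kernel-verified Lean document; each statement's English description precedes it below -/
import Mathlib

section
/- Let l be a natural number with 0 < l and let ξ be an ordinal. If a and b are finite sets of ordinals with |a| = |b| such that every element γ of a ∪ b is multiplicatively indecomposable, satisfies ξ < γ, and satisfies ω^l ≤ γ, then E_l^ξ(a,b) holds. -/
/-- The increasing enumeration of a finite set of ordinals, with the ordinal `ξ`
prepended at index `0` (so index `i + 1` gives the `i`-th element of `a` in
increasing order). -/
noncomputable def finsetEnum (ξ : Ordinal) (a : Finset Ordinal) : ℕ → Ordinal
  | 0 => ξ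
  | (i + 1) => (a.sort (· ≤ ·)).getD i 0

/-- The relation `E_l^ξ` on finite sets of ordinals. -/
def ERel (l : ℕ) (ξ : Ordinal) (a b : Finset Ordinal) : Prop :=
  a.card = b.card ∧
    ∀ i < a.card, ∃ μ ν ρ : Ordinal,
      finsetEnum ξ a (i + 1) = finsetEnum ξ a i + Ordinal.omega0 ^ (l : Ordinal) * μ + ρ ∧
      finsetEnum ξ b (i + 1) = finsetEnum ξ b i + Ordinal.omega0 ^ (l : Ordinal) * ν + ρ ∧
      ρ < Ordinal.omega0 ^ (l : Ordinal) ∧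
      (min μ ν = 0 → μ = 0 ∧ ν = 0)

/-! Every multiplicatively indecomposable `γ ≥ ω ^ e` with `e > 0` is additively indecomposable,
hence of the form `ω ^ β` with `β ≥ e`. So `γ` absorbs every smaller ordinal on the left and is
a nonzero multiple of `ω ^ e`: each step `α_i < α_{i+1}` of the enumeration is
`α_{i+1} = α_i + ω ^ e * μ` with `μ > 0`, and `E_l^ξ` holds with `ρ = 0`. -/

open Ordinal

namespace Ordinal

theorem IsPrincipal.isPrincipal_add_of_omega0_le {γ : Ordinal} (hγ : IsPrincipal (· * ·) γ)
    (hω : ω ≤ γ) : IsPrincipal (· + ·) γ :=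
  isPrincipal_add_of_isPrincipal_mul hγ <| by
    rintro rfl
    exact (natCast_lt_omega0 2).not_ge hω

theorem exists_pos_eq_add_omega0_opow_mul {γ x e : Ordinal} (hγ : IsPrincipal (· + ·) γ)
    (he : ω ^ e ≤ γ) (hx : x < γ) : ∃ μ, 0 < μ ∧ γ = x + ω ^ e * μ := by
  have hγ0 : γ ≠ 0 := (pos_of_gt hx).ne'
  obtain ⟨β, rfl⟩ : ∃ β, ω ^ β = γ :=
    (isPrincipal_add_iff_zero_or_omega0_opow.1 hγ).resolve_left hγ0
  obtain ⟨μ, hμ⟩ := opow_dvd_opow ω ((opow_le_opow_iff_right one_lt_omega0).1 he)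
  refine ⟨μ, pos_iff_ne_zero.2 ?_, ?_⟩
  · rintro rfl
    exact hγ0 (by rw [hμ, mul_zero])
  · rw [← hμ, hγ.add_eq_right hx]

end Ordinal

section finsetEnum

variable {ξ : Ordinal} {s : Finset Ordinal} {i : ℕ}

theorem finsetEnum_succ (hi : i < s.card) :
    finsetEnum ξ s (i + 1) = (s.sort (· ≤ ·))[i]'(by rwa [Finset.length_sort]) := by
  rw [finsetEnum, List.getD_eq_getElem]

theorem finsetEnum_succ_mem (hi : i < s.card) : finsetEnum ξ s (i + 1) ∈ s := by
  rw [finsetEnum_succ hi]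
  exact (Finset.mem_sort _).1 (List.getElem_mem _)

theorem finsetEnum_lt_finsetEnum_succ (hξ : ∀ γ ∈ s, ξ < γ) (hi : i < s.card) :
    finsetEnum ξ s i < finsetEnum ξ s (i + 1) := by
  cases i with
  | zero => exact hξ _ (finsetEnum_succ_mem hi)
  | succ j =>
    rw [finsetEnum_succ (Nat.lt_of_succ_lt hi), finsetEnum_succ hi]
    exact s.sortedLT_sort.getElem_lt_getElem_of_lt (Nat.lt_succ_self j)

theorem exists_pos_finsetEnum_succ_eq {e : Ordinal} (he : e ≠ 0)
    (hs : ∀ γ ∈ s, IsPrincipal (· * ·) γ ∧ ξ < γ ∧ ω ^ e ≤ γ) (hi : i < s.card) :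
    ∃ μ, 0 < μ ∧ finsetEnum ξ s (i + 1) = finsetEnum ξ s i + ω ^ e * μ := by
  obtain ⟨hmul, -, hle⟩ := hs _ (finsetEnum_succ_mem hi)
  have hω : ω ≤ finsetEnum ξ s (i + 1) := (left_le_opow ω (pos_iff_ne_zero.2 he)).trans hle
  exact exists_pos_eq_add_omega0_opow_mul (hmul.isPrincipal_add_of_omega0_le hω) hle
    (finsetEnum_lt_finsetEnum_succ (fun γ hγ => (hs γ hγ).2.1) hi)

end finsetEnum

/-- If `0 < l`, `ξ` is an ordinal, and `a` and `b` are finite sets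
of ordinals with `|a| = |b|` such that every element `γ` of `a ∪ b` is
multiplicatively indecomposable, satisfies `ξ < γ` and satisfies `ω^l ≤ γ`,
then `E_l^ξ(a,b)` holds. -/
theorem stmt2 (l : ℕ) (hl : 0 < l) (ξ : Ordinal) (a b : Finset Ordinal)
    (hcard : a.card = b.card)
    (h : ∀ γ ∈ a ∪ b, (∀ x < γ, ∀ y < γ, x * y < γ) ∧ ξ < γ ∧
      Ordinal.omega0 ^ (l : Ordinal) ≤ γ) :
    ERel l ξ a b := by
  have hl' : (l : Ordinal) ≠ 0 := by exact_mod_cast hl.ne'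
  have hs : ∀ s ⊆ a ∪ b, ∀ γ ∈ s, IsPrincipal (· * ·) γ ∧ ξ < γ ∧ ω ^ (l : Ordinal) ≤ γ :=
    fun s hsub γ hγ =>
      let ⟨hmul, hξ, hle⟩ := h γ (hsub hγ)
      ⟨fun x y hx hy => hmul x hx y hy, hξ, hle⟩
  refine ⟨hcard, fun i hi => ?_⟩
  obtain ⟨μ, hμ, ha⟩ := exists_pos_finsetEnum_succ_eq hl' (hs a Finset.subset_union_left) hi
  obtain ⟨ν, hν, hb⟩ :=
    exists_pos_finsetEnum_succ_eq hl' (hs b Finset.subset_union_right) (hcard ▸ hi)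
  exact ⟨μ, ν, 0, by rw [add_zero, ha], by rw [add_zero, hb], opow_pos _ omega0_pos,
    fun hmin => absurd hmin (lt_min hμ hν).ne'⟩
end

section
/- Let κ be an uncountable regular cardinal such that the set of all binary sequences of length < κ has cardinality κ. Let ι be an injection from κ into the binary sequences of length < κ with the property that for every x : κ → 2 there is an ordinal α < κ such that there is no β < κ with x↾α ⊆ ι(β). Let T be the set of all binary sequences t of length < κ such that t ⊆ ι(α) for some α < κ, and let ∂T be the set of all binary sequences t of length < κ with t ∉ T such that t↾γ ∈ T for every ordinal γ less than the length of t. Then ∂T has cardinality κ. -/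
/-- A binary sequence, coded as a pair consisting of its length and its values
(values at or beyond the length are irrelevant junk, normalized to `0` by
`IsBSeq`). -/
abbrev BSeq : Type _ := Ordinal × (Ordinal → Fin 2)

/-- The length of a binary sequence. -/
def bLen (t : BSeq) : Ordinal := t.1

/-- The values of a binary sequence. -/
def bVal (t : BSeq) : Ordinal → Fin 2 := t.2

/-- A pair codes a genuine binary sequence: all values at or beyond the length
are `0`. -/
def IsBSeq (t : BSeq) : Prop := ∀ β, bLen t ≤ β → bVal t β = 0

/-- `BExt t u` means `t ⊆ u`: the binary sequence `u` extends `t`. -/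
def BExt (t u : BSeq) : Prop := bLen t ≤ bLen u ∧ ∀ β < bLen t, bVal u β = bVal t β

/-- `BExtFun t x` means `t ⊆ x`: the total function `x` extends the binary
sequence `t`. -/
def BExtFun (t : BSeq) (x : Ordinal → Fin 2) : Prop := ∀ β < bLen t, x β = bVal t β

/-- `x↾γ`: the restriction of `x : κ → 2` to `γ`, as a binary sequence of
length `γ`. -/
noncomputable def bRestrict (x : Ordinal → Fin 2) (γ : Ordinal) : BSeq :=
  (γ, fun β => if β < γ then x β else 0)

/-- The lexicographic ordering on binary sequences. -/
def BLex (s t : BSeq) : Prop :=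
  (BExt s t ∧ s ≠ t) ∨
    ∃ γ, γ < bLen s ∧ γ < bLen t ∧ (∀ β < γ, bVal s β = bVal t β) ∧ bVal s γ < bVal t γ

universe u

/-!
Each `ι α` lies in `T`, but the branch `bVal (ι α)` leaves `T` below `κ`; cutting it at the
first level where it leaves `T` gives a node `f α ∈ ∂T` that properly extends `ι α`. Since `ι`
is injective, `α` is recovered from `f α` together with the length of `ι α`, an ordinal below
the length of `f α`, so every fibre of `f` has size `< κ`. As `κ` is regular, `κ` points
cannot be covered by fewer than `κ` such fibres, whence `|∂T| ≥ κ`; the reverse inequality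
is the hypothesis on the number of sequences of length `< κ`.
-/

theorem Cardinal.IsRegular.le_mk_of_mk_fiber_lt {α β : Type u} {θ : Cardinal}
    (hθ : θ.IsRegular) (f : α → β) (hα : θ ≤ Cardinal.mk α)
    (hfiber : ∀ b, Cardinal.mk ↥(f ⁻¹' {b}) < θ) : θ ≤ Cardinal.mk β := by
  by_contra! hβ
  obtain ⟨b, hb⟩ := Cardinal.infinite_pigeonhole_card f θ hα hθ.aleph0_le (by rwa [hθ.cof_ord])
  exact (hfiber b).not_ge hb

@[simp]
theorem bLen_bRestrict (x : Ordinal → Fin 2) (γ : Ordinal) : bLen (bRestrict x γ) = γ := rfl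

theorem isBSeq_bRestrict (x : Ordinal → Fin 2) (γ : Ordinal) : IsBSeq (bRestrict x γ) :=
  fun _ hβ => if_neg (not_lt.2 hβ)

theorem bRestrict_bVal_bRestrict (x : Ordinal → Fin 2) {γ μ : Ordinal} (h : γ ≤ μ) :
    bRestrict (bVal (bRestrict x μ)) γ = bRestrict x γ := by
  refine Prod.ext rfl (funext fun β => ?_)
  by_cases hβ : β < γ
  · simp [bRestrict, bVal, hβ, hβ.trans_le h]
  · simp [bRestrict, hβ]

theorem IsBSeq.bRestrict_bLen {t : BSeq} (ht : IsBSeq t) : bRestrict (bVal t) (bLen t) = t := by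
  refine Prod.ext rfl (funext fun β => ?_)
  by_cases hβ : β < bLen t
  · simp [bRestrict, bVal, hβ]
  · simp only [bRestrict, hβ, if_false]
    exact (ht β (not_lt.1 hβ)).symm

theorem BExt.refl (t : BSeq) : BExt t t := ⟨le_rfl, fun _ _ => rfl⟩

theorem BExt.trans {s t u : BSeq} (hst : BExt s t) (htu : BExt t u) : BExt s u :=
  ⟨hst.1.trans htu.1, fun β hβ => (htu.2 β (hβ.trans_le hst.1)).trans (hst.2 β hβ)⟩

theorem bExt_bRestrict_of_le (x : Ordinal → Fin 2) {γ μ : Ordinal} (h : γ ≤ μ) :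
    BExt (bRestrict x γ) (bRestrict x μ) :=
  ⟨h, fun β (hβ : β < γ) => by simp [bRestrict, bVal, hβ, hβ.trans_le h]⟩

section Boundary

variable (κ : Cardinal.{u}) (ι : Ordinal.{u} → BSeq.{u, u})

/-- `t ∈ T`, where `T` is the tree generated by `ι '' Iio κ.ord`. -/
def InTree (t : BSeq) : Prop := ∃ α < κ.ord, BExt t (ι α)

def treeBoundary : Set BSeq :=
  {t | IsBSeq t ∧ bLen t < κ.ord ∧ ¬ InTree κ ι t ∧
    ∀ γ < bLen t, InTree κ ι (bRestrict (bVal t) γ)}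

variable {κ ι}

theorem InTree.of_bExt {s t : BSeq} (ht : InTree κ ι t) (hst : BExt s t) : InTree κ ι s :=
  let ⟨α, hα, htα⟩ := ht
  ⟨α, hα, hst.trans htα⟩

/-- A branch `x` leaving the tree below `κ` leaves it through a boundary node, namely its
restriction to the least `μ` with `x↾μ ∉ T`. -/
theorem exists_bRestrict_mem_treeBoundary (x : Ordinal → Fin 2)
    (hx : ∃ μ < κ.ord, ¬ InTree κ ι (bRestrict x μ)) :
    ∃ μ, bRestrict x μ ∈ treeBoundary κ ι ∧ ∀ γ, InTree κ ι (bRestrict x γ) → γ < μ := by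
  set A : Set Ordinal := {μ | ¬ InTree κ ι (bRestrict x μ)}
  obtain ⟨μ₀, hμ₀, hμ₀A⟩ := hx
  have hA : A.Nonempty := ⟨μ₀, hμ₀A⟩
  set μ := Ordinal.lt_wf.min A hA
  have hμA : μ ∈ A := Ordinal.lt_wf.min_mem A hA
  refine ⟨μ, ⟨isBSeq_bRestrict x μ, (Ordinal.lt_wf.min_le hμ₀A).trans_lt hμ₀, hμA,
    fun γ hγ => ?_⟩, fun γ hγ => ?_⟩
  · rw [bRestrict_bVal_bRestrict (μ := μ) x hγ.le]
    by_contra hγA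
    exact Ordinal.lt_wf.not_lt_min A hγA hγ
  · by_contra! hμγ
    exact hμA (hγ.of_bExt (bExt_bRestrict_of_le x hμγ))

theorem exists_treeBoundary_extension
    (hιval : ∀ α < κ.ord, IsBSeq (ι α))
    (hno : ∀ x : Ordinal → Fin 2, ∃ μ < κ.ord, ¬ InTree κ ι (bRestrict x μ))
    {α : Ordinal} (hα : α < κ.ord) :
    ∃ t ∈ treeBoundary κ ι, bLen (ι α) < bLen t ∧ bRestrict (bVal t) (bLen (ι α)) = ι α := by
  obtain ⟨μ, hμ, hlt⟩ := exists_bRestrict_mem_treeBoundary (bVal (ι α)) (hno _)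
  have hια : bRestrict (bVal (ι α)) (bLen (ι α)) = ι α := (hιval α hα).bRestrict_bLen
  have hlen : bLen (ι α) < μ := hlt _ (by rw [hια]; exact ⟨α, hα, BExt.refl _⟩)
  exact ⟨_, hμ, hlen, by rw [bRestrict_bVal_bRestrict _ hlen.le, hια]⟩

theorem mk_le_card_bLen_of_forall_eq {s : Set Ordinal} (hinj : Set.InjOn ι s)
    {f : s → BSeq.{u, u}}
    (hflen : ∀ a : s, bLen (ι a) < bLen (f a))
    (hfval : ∀ a : s, bRestrict (bVal (f a)) (bLen (ι a)) = ι a)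
    {t : BSeq} (F : Set s) (hF : ∀ a ∈ F, f a = t) :
    Cardinal.mk F ≤ Cardinal.lift.{u + 1} (bLen t).card := by
  let g : F → Set.Iio (bLen t) := fun a => ⟨bLen (ι a.1), hF a.1 a.2 ▸ hflen a.1⟩
  have hg : Function.Injective g := by
    rintro ⟨a, ha⟩ ⟨b, hb⟩ hab
    refine Subtype.ext (Subtype.ext (hinj a.2 b.2 ?_))
    rw [← hfval a, ← hfval b, hF a ha, hF b hb,
      show bLen (ι a) = bLen (ι b) from congrArg Subtype.val hab]
  exact (Cardinal.mk_le_of_injective hg).trans_eq (Cardinal.mk_Iio_ordinal _)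

end Boundary

theorem stmt10_general (κ : Cardinal.{u}) (hreg : κ.IsRegular)
    (hsize : Cardinal.mk ↥{t : BSeq | IsBSeq t ∧ bLen t < κ.ord} =
      Cardinal.lift.{u + 1} κ)
    (ι : Ordinal → BSeq)
    (hιval : ∀ α < κ.ord, IsBSeq (ι α) ∧ bLen (ι α) < κ.ord)
    (hιinj : Set.InjOn ι (Set.Iio κ.ord))
    (hno : ∀ x : Ordinal → Fin 2, ∃ α < κ.ord,
      ¬ ∃ β < κ.ord, BExt (bRestrict x α) (ι β)) :
    Cardinal.mk ↥{t : BSeq | IsBSeq t ∧ bLen t < κ.ord ∧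
        (¬ ∃ α < κ.ord, BExt t (ι α)) ∧
        ∀ γ < bLen t, ∃ α < κ.ord, BExt (bRestrict (bVal t) γ) (ι α)} =
      Cardinal.lift.{u + 1} κ := by
  show Cardinal.mk (treeBoundary κ ι) = _
  refine le_antisymm (hsize ▸ Cardinal.mk_le_mk_of_subset fun t ht => ⟨ht.1, ht.2.1⟩) ?_
  choose f hf hflen hfval using fun a : Set.Iio κ.ord =>
    exists_treeBoundary_extension (fun α hα => (hιval α hα).1) hno a.2
  refine hreg.lift.le_mk_of_mk_fiber_lt (fun a => (⟨f a, hf a⟩ : treeBoundary κ ι))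
    (by rw [Cardinal.mk_Iio_ordinal, Cardinal.card_ord]) fun t => ?_
  calc _ ≤ Cardinal.lift.{u + 1} (bLen t.1).card :=
        mk_le_card_bLen_of_forall_eq hιinj hflen hfval _ fun a ha => congrArg Subtype.val ha
    _ < Cardinal.lift.{u + 1} κ := Cardinal.lift_lt.2 (Cardinal.lt_ord.1 t.2.2.1)

/-- Let `κ` be an uncountable regular cardinal such that the set
of all binary sequences of length `< κ` has cardinality `κ`.  Let `ι` be an
injection from `κ` into the binary sequences of length `< κ` such that for
every `x : κ → 2` there is `α < κ` such that no `β < κ` satisfies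
`x↾α ⊆ ι(β)`.  Let `T` be the set of binary sequences of length `< κ` that are
initial segments of some `ι(α)` with `α < κ`, and let `∂T` be the set of
binary sequences `t` of length `< κ` with `t ∉ T` all of whose proper
restrictions `t↾γ`, `γ <` length of `t`, lie in `T`.  Then `∂T` has
cardinality `κ`. -/
theorem stmt10 (κ : Cardinal.{u}) (hreg : κ.IsRegular)
    (hunc : Cardinal.aleph0 < κ)
    (hsize : Cardinal.mk ↥{t : BSeq | IsBSeq t ∧ bLen t < κ.ord} =
      Cardinal.lift.{u + 1} κ)
    (ι : Ordinal → BSeq)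
    (hιval : ∀ α < κ.ord, IsBSeq (ι α) ∧ bLen (ι α) < κ.ord)
    (hιinj : Set.InjOn ι (Set.Iio κ.ord))
    (hno : ∀ x : Ordinal → Fin 2, ∃ α < κ.ord,
      ¬ ∃ β < κ.ord, BExt (bRestrict x α) (ι β)) :
    Cardinal.mk ↥{t : BSeq | IsBSeq t ∧ bLen t < κ.ord ∧
        (¬ ∃ α < κ.ord, BExt t (ι α)) ∧
        ∀ γ < bLen t, ∃ α < κ.ord, BExt (bRestrict (bVal t) γ) (ι α)} =
      Cardinal.lift.{u + 1} κ :=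
  stmt10_general κ hreg hsize ι hιval hιinj hno
end
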